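/- arXiv:2210.12135 — 2 statements merged into one kernel-verified Lean document; each statement's English description precedes it below -/
import Mathlib

section
/- Let X be a metric space and let γ : [0,1] → X be a constant-speed geodesic, i.e. dist(γ(s'), γ(t')) = |s' − t'| · dist(γ(0), γ(1)) for all s', t' ∈ [0,1], with γ(0) = μ and γ(1) = ν̃. Let b ∈ (0,1], set ν = γ(b), and assume dist(μ, ν) > 0. For any s ∈ [0,b], let μ_t = γ(s) and t = s/b. Then (1 − t)·dist(μ, μ_t)² + t·dist(ν, μ_t)² ≤ (1 − s)·dist(μ, μ_t)² + s·dist(ν̃, μ_t)². (This is Theorem 1 of the paper: extending a McCann interpolation from one side can only increase the geometric sparse regularizer, stated in the metric-geodesic form that the paper's proof actually uses, since McCann interpolations are exactly the constant-speed geodesics of the Wasserstein-2 space.) -/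
/-!
If `γ` has constant speed `D`, the two-atom regularizer of `γ s` with respect to the endpoints
`γ 0`, `γ b` and weight `s / b` equals `s (b - s) D²`, which only grows when `b` is pushed to `1`.
-/

/-- The geometric sparse regularizer of `z` for the dictionary `{x, y}` with weights `(1 - t, t)`. -/
noncomputable def twoAtomRegularizer {X : Type*} [PseudoMetricSpace X] (x y z : X) (t : ℝ) : ℝ :=
  (1 - t) * dist x z ^ 2 + t * dist y z ^ 2

theorem twoAtomRegularizer_eq_of_dist_eq {X : Type*} [PseudoMetricSpace X] {x y z : X}
    {s b t D : ℝ} (hx : dist x z = s * D) (hy : dist y z = (b - s) * D) (ht : t * b = s) :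
    twoAtomRegularizer x y z t = s * (b - s) * D ^ 2 := by
  unfold twoAtomRegularizer
  rw [hx, hy]
  linear_combination (b - 2 * s) * D ^ 2 * ht

theorem dist_eq_sub_mul_of_constant_speed {X : Type*} [PseudoMetricSpace X] {γ : ℝ → X}
    (hγ : ∀ s' ∈ Set.Icc (0:ℝ) 1, ∀ t' ∈ Set.Icc (0:ℝ) 1,
      dist (γ s') (γ t') = |s' - t'| * dist (γ 0) (γ 1))
    {p q : ℝ} (hp : 0 ≤ p) (hpq : p ≤ q) (hq : q ≤ 1) :
    dist (γ q) (γ p) = (q - p) * dist (γ 0) (γ 1) := by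
  rw [hγ q ⟨hp.trans hpq, hq⟩ p ⟨hp, hpq.trans hq⟩, abs_of_nonneg (sub_nonneg.2 hpq)]

theorem geodesic_extension_increases_regularizer_general
    {X : Type*} [MetricSpace X] (γ : ℝ → X)
    (hγ : ∀ s' ∈ Set.Icc (0:ℝ) 1, ∀ t' ∈ Set.Icc (0:ℝ) 1,
      dist (γ s') (γ t') = |s' - t'| * dist (γ 0) (γ 1))
    (μ νtilde ν : X) (hμ : γ 0 = μ) (hνtilde : γ 1 = νtilde)
    (b : ℝ) (hb : b ∈ Set.Ioc (0:ℝ) 1) (hν : γ b = ν)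
    (s : ℝ) (hs : s ∈ Set.Icc (0:ℝ) b) (μt : X) (hμt : γ s = μt)
    (t : ℝ) (ht : t = s / b) :
    (1 - t) * dist μ μt ^ 2 + t * dist ν μt ^ 2 ≤
      (1 - s) * dist μ μt ^ 2 + s * dist νtilde μt ^ 2 := by
  obtain ⟨hb0, hb1⟩ := hb
  obtain ⟨hs0, hsb⟩ := hs
  subst hμ hνtilde hν hμt ht
  have hμs : dist (γ 0) (γ s) = s * dist (γ 0) (γ 1) := by
    rw [dist_comm, dist_eq_sub_mul_of_constant_speed hγ le_rfl hs0 (hsb.trans hb1), sub_zero]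
  have hνs := dist_eq_sub_mul_of_constant_speed hγ hs0 hsb hb1
  have hνtildes := dist_eq_sub_mul_of_constant_speed hγ hs0 (hsb.trans hb1) le_rfl
  change twoAtomRegularizer _ _ _ (s / b) ≤ twoAtomRegularizer _ _ _ s
  rw [twoAtomRegularizer_eq_of_dist_eq hμs hνs (div_mul_cancel₀ s hb0.ne'),
    twoAtomRegularizer_eq_of_dist_eq hμs hνtildes (mul_one s)]
  gcongr

/-- Theorem 1 of the paper (metric-geodesic form): let `γ : [0,1] → X` be a
constant-speed geodesic with `γ 0 = μ` and `γ 1 = ν̃`, let `ν = γ b` for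
`b ∈ (0,1]` with `dist μ ν > 0`.  For `s ∈ [0,b]`, `μ_t = γ s` and `t = s / b`,
extending the interpolation can only increase the geometric sparse regularizer:
`(1−t)·dist(μ,μ_t)² + t·dist(ν,μ_t)² ≤ (1−s)·dist(μ,μ_t)² + s·dist(ν̃,μ_t)²`. -/
theorem geodesic_extension_increases_regularizer
    {X : Type*} [MetricSpace X] (γ : ℝ → X)
    (hγ : ∀ s' ∈ Set.Icc (0:ℝ) 1, ∀ t' ∈ Set.Icc (0:ℝ) 1,
      dist (γ s') (γ t') = |s' - t'| * dist (γ 0) (γ 1))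
    (μ νtilde ν : X) (hμ : γ 0 = μ) (hνtilde : γ 1 = νtilde)
    (b : ℝ) (hb : b ∈ Set.Ioc (0:ℝ) 1) (hν : γ b = ν)
    (hpos : 0 < dist μ ν)
    (s : ℝ) (hs : s ∈ Set.Icc (0:ℝ) b) (μt : X) (hμt : γ s = μt)
    (t : ℝ) (ht : t = s / b) :
    (1 - t) * dist μ μt ^ 2 + t * dist ν μt ^ 2 ≤
      (1 - s) * dist μ μt ^ 2 + s * dist νtilde μt ^ 2 :=
  geodesic_extension_increases_regularizer_general γ hγ μ νtilde ν hμ hνtilde b hb hν s hs μt hμt t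
    ht
end

section
/- Let X be a metric space and let γ : [0,1] → X be a constant-speed geodesic, i.e. dist(γ(s'), γ(t')) = |s' − t'| · dist(γ(0), γ(1)) for all s', t' ∈ [0,1], with dist(γ(0), γ(1)) > 0. Let 0 ≤ a < b ≤ 1, set μ = γ(a) and ν = γ(b). For any r ∈ [a,b], let μ_t = γ(r) and t = (r − a)/(b − a). Then (1 − t)·dist(μ, μ_t)² + t·dist(ν, μ_t)² ≤ (1 − r)·dist(γ(0), μ_t)² + r·dist(γ(1), μ_t)². (This is Corollary 1 of the paper in metric-geodesic form: among all pairs of measures containing the McCann interpolation between the generators μ and ν, the geometric sparse regularizer of every point of the interpolation is minimized by the pair (μ, ν) itself.) -/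
/-!
Along a constant-speed geodesic of speed `D`, the regularizer of `γ r` with respect to
`(γ a, γ b)` and weights `(1 - t, t)`, `t = (r - a)/(b - a)`, equals `(r - a)(b - r) D²`.
For the pair `(γ 0, γ 1)` this is `r (1 - r) D²`, and `r - a ≤ r`, `b - r ≤ 1 - r`.
-/

open Set

def geometricSparseRegularizer {X : Type*} [PseudoMetricSpace X] (μ ν : X) (t : ℝ) (x : X) :
    ℝ :=
  (1 - t) * dist μ x ^ 2 + t * dist ν x ^ 2

lemma geometricSparseRegularizer_eq_of_dist_eq {X : Type*} [PseudoMetricSpace X] {γ : ℝ → X}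
    {D a b r : ℝ} (hγ : ∀ s ∈ Icc a b, ∀ s' ∈ Icc a b, dist (γ s) (γ s') = |s - s'| * D)
    (hab : a < b) (hr : r ∈ Icc a b) :
    geometricSparseRegularizer (γ a) (γ b) ((r - a) / (b - a)) (γ r) = (r - a) * (b - r) * D ^ 2 := by
  have ha : a ∈ Icc a b := left_mem_Icc.2 hab.le
  have hb : b ∈ Icc a b := right_mem_Icc.2 hab.le
  rw [geometricSparseRegularizer, hγ a ha r hr, hγ b hb r hr,
    abs_of_nonpos (sub_nonpos.2 hr.1), abs_of_nonneg (sub_nonneg.2 hr.2)]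
  field_simp [(sub_pos.2 hab).ne']
  ring

theorem regularizer_minimized_by_generators_general
    {X : Type*} [MetricSpace X] (γ : ℝ → X)
    (hγ : ∀ s' ∈ Set.Icc (0:ℝ) 1, ∀ t' ∈ Set.Icc (0:ℝ) 1,
      dist (γ s') (γ t') = |s' - t'| * dist (γ 0) (γ 1))
    (a b : ℝ) (ha : 0 ≤ a) (hab : a < b) (hb : b ≤ 1)
    (μ ν : X) (hμ : γ a = μ) (hν : γ b = ν)
    (r : ℝ) (hr : r ∈ Set.Icc a b) (μt : X) (hμt : γ r = μt)
    (t : ℝ) (ht : t = (r - a) / (b - a)) :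
    (1 - t) * dist μ μt ^ 2 + t * dist ν μt ^ 2 ≤
      (1 - r) * dist (γ 0) μt ^ 2 + r * dist (γ 1) μt ^ 2 := by
  subst hμ hν hμt ht
  have hsub : Icc a b ⊆ Icc 0 1 := Icc_subset_Icc ha hb
  have inner := geometricSparseRegularizer_eq_of_dist_eq
    (fun s hs s' hs' => hγ s (hsub hs) s' (hsub hs')) hab hr
  have outer := geometricSparseRegularizer_eq_of_dist_eq hγ zero_lt_one (hsub hr)
  simp only [sub_zero, div_one] at outer
  rw [geometricSparseRegularizer] at inner outer
  rw [inner, outer]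
  gcongr <;> linarith [hr.1, hr.2]

/-- Corollary 1 of the paper (metric-geodesic form): let `γ : [0,1] → X` be a
constant-speed geodesic with `dist (γ 0) (γ 1) > 0`, let `0 ≤ a < b ≤ 1`,
`μ = γ a`, `ν = γ b`.  For `r ∈ [a,b]`, `μ_t = γ r` and `t = (r − a)/(b − a)`,
the geometric sparse regularizer with respect to `(μ, ν)` is at most the one
with respect to the extended pair `(γ 0, γ 1)`:
`(1−t)·dist(μ,μ_t)² + t·dist(ν,μ_t)² ≤ (1−r)·dist(γ 0, μ_t)² + r·dist(γ 1, μ_t)²`. -/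
theorem regularizer_minimized_by_generators
    {X : Type*} [MetricSpace X] (γ : ℝ → X)
    (hγ : ∀ s' ∈ Set.Icc (0:ℝ) 1, ∀ t' ∈ Set.Icc (0:ℝ) 1,
      dist (γ s') (γ t') = |s' - t'| * dist (γ 0) (γ 1))
    (hpos : 0 < dist (γ 0) (γ 1))
    (a b : ℝ) (ha : 0 ≤ a) (hab : a < b) (hb : b ≤ 1)
    (μ ν : X) (hμ : γ a = μ) (hν : γ b = ν)
    (r : ℝ) (hr : r ∈ Set.Icc a b) (μt : X) (hμt : γ r = μt)
    (t : ℝ) (ht : t = (r - a) / (b - a)) :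
    (1 - t) * dist μ μt ^ 2 + t * dist ν μt ^ 2 ≤
      (1 - r) * dist (γ 0) μt ^ 2 + r * dist (γ 1) μt ^ 2 :=
  regularizer_minimized_by_generators_general γ hγ a b ha hab hb μ ν hμ hν r hr μt hμt t ht
end
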